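/- arXiv:2301.04808 — 3 statements merged into one kernel-verified Lean document; each statement's English description precedes it below -/
import Mathlib

section
/- Let 0 < θ < 1/4 and p ∈ (0,1/2). Under the measure μ, with probability at least 1 − 4m²·e^{−θ²np²/4}, the random bipartite graph satisfies simultaneously: |#R_x − np| ≤ npθ for every right vertex b_x, and #(R_x ∖ R_y) ≥ np(1−θ) − np²(1+θ) for every pair of distinct right vertices b_x, b_y. -/
/-- Weight of a binary matrix under i.i.d. Bernoulli(p) entries: entry `1` has
probability `p`, entry `0` has probability `1 - p`. -/
noncomputable def matWeight (m n : ℕ) (p : ℝ) (X : Matrix (Fin m) (Fin n) (ZMod 2)) : ℝ :=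
  ∏ j : Fin m, ∏ i : Fin n, if X j i = 1 then p else 1 - p

/-- The probability measure `μ` on `m × n` binary matrices with i.i.d. Bernoulli(p)
entries, evaluated on an event `E`. -/
noncomputable def matProb (m n : ℕ) (p : ℝ) (E : Set (Matrix (Fin m) (Fin n) (ZMod 2))) : ℝ :=
  ∑ X : Matrix (Fin m) (Fin n) (ZMod 2), E.indicator (matWeight m n p) X

/-- `R_j`, the set of left neighbours of the right vertex `b_j`. -/
def rightNbrs {m n : ℕ} (X : Matrix (Fin m) (Fin n) (ZMod 2)) (j : Fin m) : Finset (Fin n) :=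
  Finset.univ.filter fun i => X j i = 1

/-!
Transposing, the `n` columns of `X` are i.i.d. vectors in `(ZMod 2)^m`, and every quantity in the
statement counts the columns satisfying a predicate: `c x = 1` (probability `p`) for `#R_x`, and
`c x = 1 ∧ c y ≠ 1` (probability `p(1-p)`) for `#(R_x \ R_y)`. A Chernoff bound with parameter
`t/(2n)` shows that such a count deviates from its mean by at least `t ≤ 2n` with probability at
most `2 e^{-t²/(4n)}`. For `t = npθ` this is `2 e^{-θ²np²/4}`, and since
`np(1-θ) - np²(1+θ) ≤ np(1-p) - npθ`, a union bound over the `m²` pairs `(x, y)` finishes.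
-/

open Finset Real

section ProductWeight

variable {α : Type*} [Fintype α] {w : α → ℝ} {n : ℕ}

theorem sum_pi_prod_eq_one {ι : Type*} [Fintype ι] [DecidableEq ι] (hw : ∑ a, w a = 1) :
    ∑ v : ι → α, ∏ i, w (v i) = 1 := by
  rw [← Fintype.prod_sum, hw, prod_const_one]

theorem sum_pi_prod_mul_prod_eq_prod_sum {ι : Type*} [Fintype ι] [DecidableEq ι]
    (hw : ∑ a, w a = 1) (S : Finset ι) (g : ι → α → ℝ) :
    ∑ v : ι → α, (∏ i, w (v i)) * ∏ i ∈ S, g i (v i) = ∏ i ∈ S, ∑ a, w a * g i a := by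
  calc ∑ v : ι → α, (∏ i, w (v i)) * ∏ i ∈ S, g i (v i)
      = ∑ v : ι → α, ∏ i, w (v i) * (if i ∈ S then g i (v i) else 1) := by
        refine sum_congr rfl fun v _ => ?_
        rw [prod_mul_distrib, Fintype.prod_ite_mem]
    _ = ∏ i, ∑ a, w a * (if i ∈ S then g i a else 1) :=
        (Fintype.prod_sum fun i a => w a * (if i ∈ S then g i a else 1)).symm
    _ = ∏ i ∈ S, ∑ a, w a * g i a := by
        rw [← Fintype.prod_ite_mem S]
        refine prod_congr rfl fun i _ => ?_
        split_ifs <;> simp [hw]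

theorem sum_pi_indicator_le_exp_mul_pow (hw0 : ∀ a, 0 ≤ w a) (f : α → ℝ) (r : ℝ) :
    ∑ v : Fin n → α, {v | r ≤ ∑ i, f (v i)}.indicator (fun v => ∏ i, w (v i)) v ≤
      exp (-r) * (∑ a, w a * exp (f a)) ^ n := by
  have markov (v : Fin n → α) : {v | r ≤ ∑ i, f (v i)}.indicator (fun v => ∏ i, w (v i)) v ≤
      exp (-r) * ∏ i, w (v i) * exp (f (v i)) := by
    have hw : 0 ≤ ∏ i, w (v i) := prod_nonneg fun i _ => hw0 _
    rw [prod_mul_distrib, ← exp_sum, mul_left_comm, ← exp_add]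
    refine Set.indicator_apply_le' (fun hv => ?_) fun _ => by positivity
    exact le_mul_of_one_le_right hw (one_le_exp (by simp only [Set.mem_ofPred_eq] at hv; linarith))
  calc _ ≤ ∑ v : Fin n → α, exp (-r) * ∏ i, w (v i) * exp (f (v i)) :=
        sum_le_sum fun v _ => markov v
    _ = _ := by
        rw [← mul_sum, ← Fintype.prod_sum fun _ a => w a * exp (f a), prod_const, card_univ,
          Fintype.card_fin]

theorem exp_neg_mul_mul_one_add_mul_exp_sub_one_pow_le {s t : ℝ} (hs0 : 0 ≤ s) (hs1 : s ≤ 1)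
    (ht0 : 0 ≤ t) (ht : t ≤ 2 * n) :
    exp (-(t / (2 * n) * (n * s + t))) * (1 + s * (exp (t / (2 * n)) - 1)) ^ n ≤
      exp (-t ^ 2 / (4 * n)) := by
  set L := t / (2 * n)
  have hL0 : 0 ≤ L := by positivity
  have hL1 : L ≤ 1 := div_le_one_of_le₀ ht (by positivity)
  have hexp : exp L - 1 ≤ L + L ^ 2 := by
    have := abs_exp_sub_one_sub_id_le (x := L) (by rwa [abs_of_nonneg hL0])
    linarith [le_abs_self (exp L - 1 - L)]
  have hpow : (1 + s * (exp L - 1)) ^ n ≤ exp (n * (s * (exp L - 1))) := by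
    rw [exp_nat_mul]
    exact pow_le_pow_left₀ (by nlinarith [add_one_le_exp L])
      (by linarith [add_one_le_exp (s * (exp L - 1))]) n
  have hquad : -(L * t) + n * L ^ 2 = -t ^ 2 / (4 * n) := by
    rcases eq_or_ne (n : ℝ) 0 with hn | hn
    · simp [L, hn]
    · simp only [L]; field_simp; ring
  calc _ ≤ exp (-(L * (n * s + t))) * exp (n * (s * (exp L - 1))) :=
        mul_le_mul_of_nonneg_left hpow (exp_pos _).le
    _ ≤ exp (-t ^ 2 / (4 * n)) := by
        rw [← exp_add, ← hquad, exp_le_exp]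
        nlinarith [mul_le_mul_of_nonneg_left hexp (by positivity : (0 : ℝ) ≤ n * s),
          mul_le_mul_of_nonneg_left hs1 (by positivity : (0 : ℝ) ≤ n * L ^ 2)]

theorem sum_pi_indicator_card_ge_le (hw0 : ∀ a, 0 ≤ w a) (hw : ∑ a, w a = 1)
    (P : α → Prop) [DecidablePred P] {t : ℝ} (ht0 : 0 ≤ t) (ht : t ≤ 2 * n) :
    ∑ v : Fin n → α, {v | n * ∑ a with P a, w a + t ≤ #{i | P (v i)}}.indicator
      (fun v => ∏ i, w (v i)) v ≤ exp (-t ^ 2 / (4 * n)) := by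
  set s := ∑ a with P a, w a
  set L := t / (2 * n)
  have hmgf : ∑ a, w a * exp (if P a then L else 0) = 1 + s * (exp L - 1) := by
    have (a : α) :
        w a * exp (if P a then L else 0) = w a + (if P a then w a else 0) * (exp L - 1) := by
      split_ifs
      · ring
      · rw [exp_zero]; ring
    rw [sum_congr rfl fun a _ => this a, sum_add_distrib, ← sum_mul, ← sum_filter, hw]
  have hevent : {v : Fin n → α | n * s + t ≤ #{i | P (v i)}} ⊆
      {v | L * (n * s + t) ≤ ∑ i, if P (v i) then L else 0} := by
    intro v hv
    simp only [Set.mem_ofPred_eq, ← sum_filter, sum_const, nsmul_eq_mul] at hv ⊢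
    rw [mul_comm _ L]
    exact mul_le_mul_of_nonneg_left hv (by positivity)
  calc _ ≤ ∑ v : Fin n → α, {v | L * (n * s + t) ≤ ∑ i, if P (v i) then L else 0}.indicator
          (fun v => ∏ i, w (v i)) v :=
        sum_le_sum fun v _ => Set.indicator_le_indicator_of_subset hevent
          (fun v => prod_nonneg fun i _ => hw0 _) v
    _ ≤ exp (-(L * (n * s + t))) * (1 + s * (exp L - 1)) ^ n := by
        rw [← hmgf]
        exact sum_pi_indicator_le_exp_mul_pow hw0 (fun a => if P a then L else 0) _
    _ ≤ exp (-t ^ 2 / (4 * n)) :=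
        exp_neg_mul_mul_one_add_mul_exp_sub_one_pow_le (sum_nonneg fun a _ => hw0 a)
          (hw ▸ sum_le_univ_sum_of_nonneg hw0) ht0 ht

theorem sum_pi_indicator_card_le_le (hw0 : ∀ a, 0 ≤ w a) (hw : ∑ a, w a = 1)
    (P : α → Prop) [DecidablePred P] {t : ℝ} (ht0 : 0 ≤ t) (ht : t ≤ 2 * n) :
    ∑ v : Fin n → α, {v | #{i | P (v i)} + t ≤ n * ∑ a with P a, w a}.indicator
      (fun v => ∏ i, w (v i)) v ≤ exp (-t ^ 2 / (4 * n)) := by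
  convert sum_pi_indicator_card_ge_le hw0 hw (fun a => ¬ P a) ht0 ht using 5 with _ _ v
  have hmass : ∑ a with ¬P a, w a = 1 - ∑ a with P a, w a := by
    rw [← hw, ← sum_filter_add_sum_filter_not univ P w, add_sub_cancel_left]
  have hcard : (#{i | ¬P (v i)} : ℝ) = n - #{i | P (v i)} := by
    rw [eq_sub_iff_add_eq', ← Nat.cast_add, card_filter_add_card_filter_not, card_univ,
      Fintype.card_fin]
  rw [hmass, hcard]
  constructor <;> intro h <;> linarith

end ProductWeight

section BernoulliMatrix

variable {m n : ℕ} {p : ℝ}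

def bernWeight (p : ℝ) (b : ZMod 2) : ℝ := if b = 1 then p else 1 - p

def colWeight (p : ℝ) (c : Fin m → ZMod 2) : ℝ := ∏ j, bernWeight p (c j)

theorem bernWeight_nonneg (hp0 : 0 ≤ p) (hp1 : p ≤ 1) (b : ZMod 2) : 0 ≤ bernWeight p b := by
  unfold bernWeight; split_ifs <;> linarith

theorem sum_bernWeight_mul (p : ℝ) (g : ZMod 2 → ℝ) :
    ∑ b, bernWeight p b * g b = (1 - p) * g 0 + p * g 1 := by
  rw [show (univ : Finset (ZMod 2)) = {0, 1} by decide, sum_pair zero_ne_one]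
  simp [bernWeight]

theorem sum_bernWeight (p : ℝ) : ∑ b, bernWeight p b = 1 := by
  simpa using sum_bernWeight_mul p 1

theorem colWeight_nonneg (hp0 : 0 ≤ p) (hp1 : p ≤ 1) (c : Fin m → ZMod 2) :
    0 ≤ colWeight p c :=
  prod_nonneg fun _ _ => bernWeight_nonneg hp0 hp1 _

theorem sum_colWeight (p : ℝ) : ∑ c : Fin m → ZMod 2, colWeight p c = 1 :=
  sum_pi_prod_eq_one (sum_bernWeight p)

def colMass (p : ℝ) (P : (Fin m → ZMod 2) → Prop) [DecidablePred P] : ℝ :=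
  ∑ c with P c, colWeight p c

def colCount (X : Matrix (Fin m) (Fin n) (ZMod 2)) (P : (Fin m → ZMod 2) → Prop)
    [DecidablePred P] : ℕ :=
  #{i | P fun j => X j i}

theorem colMass_apply_eq_one (p : ℝ) (x : Fin m) : colMass p (· x = 1) = p := by
  let g : Fin m → ZMod 2 → ℝ := fun _ b => if b = 1 then 1 else 0
  calc colMass p (· x = 1) = ∑ c, colWeight p c * ∏ j ∈ {x}, g j (c j) := by
        rw [colMass, sum_filter]
        exact sum_congr rfl fun c _ => by simp [g]
    _ = ∏ j ∈ {x}, ∑ b, bernWeight p b * g j b :=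
        sum_pi_prod_mul_prod_eq_prod_sum (sum_bernWeight p) {x} g
    _ = p := by simp only [prod_singleton, g, sum_bernWeight_mul]; simp

theorem colMass_apply_eq_one_and_ne_one (p : ℝ) {x y : Fin m} (hxy : x ≠ y) :
    colMass p (fun c => c x = 1 ∧ c y ≠ 1) = p * (1 - p) := by
  let g : Fin m → ZMod 2 → ℝ := fun j b => if j = x then (if b = 1 then 1 else 0) else
    (if b = 1 then 0 else 1)
  calc colMass p (fun c => c x = 1 ∧ c y ≠ 1)
      = ∑ c, colWeight p c * ∏ j ∈ {x, y}, g j (c j) := by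
        rw [colMass, sum_filter]
        refine sum_congr rfl fun c _ => ?_
        simp only [prod_pair hxy, g, if_pos, if_neg hxy.symm]
        split_ifs <;> simp_all
    _ = ∏ j ∈ {x, y}, ∑ b, bernWeight p b * g j b :=
        sum_pi_prod_mul_prod_eq_prod_sum (sum_bernWeight p) {x, y} g
    _ = p * (1 - p) := by
        simp only [prod_pair hxy, g, if_pos, if_neg hxy.symm, sum_bernWeight_mul]; simp

theorem matProb_eq_sum_cols (E : Set (Matrix (Fin m) (Fin n) (ZMod 2))) :
    matProb m n p E = ∑ v : Fin n → Fin m → ZMod 2,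
      {v | Matrix.of (fun j i => v i j) ∈ E}.indicator (fun v => ∏ i, colWeight p (v i)) v := by
  let e := (Equiv.piComm fun (_ : Fin n) (_ : Fin m) => ZMod 2).trans Matrix.of
  rw [matProb, ← e.sum_comp]
  refine sum_congr rfl fun v _ => ?_
  rw [← Set.indicator_comp_right]
  congr 1
  ext v
  show ∏ j, ∏ i, bernWeight p (v i j) = ∏ i, ∏ j, bernWeight p (v i j)
  exact prod_comm

theorem matWeight_nonneg (hp0 : 0 ≤ p) (hp1 : p ≤ 1) (X : Matrix (Fin m) (Fin n) (ZMod 2)) :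
    0 ≤ matWeight m n p X :=
  prod_nonneg fun j _ => prod_nonneg fun i _ => bernWeight_nonneg hp0 hp1 (X j i)

theorem matProb_univ (m n : ℕ) (p : ℝ) : matProb m n p Set.univ = 1 := by
  rw [matProb_eq_sum_cols]
  simpa using sum_pi_prod_eq_one (sum_colWeight p)

theorem matProb_compl (E : Set (Matrix (Fin m) (Fin n) (ZMod 2))) :
    matProb m n p Eᶜ = 1 - matProb m n p E := by
  rw [← matProb_univ m n p, eq_sub_iff_add_eq', matProb, matProb, matProb, ← sum_add_distrib]
  refine sum_congr rfl fun X _ => ?_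
  rw [Set.indicator_univ, ← Pi.add_apply (E.indicator _), Set.indicator_self_add_compl]

theorem matProb_mono (hp0 : 0 ≤ p) (hp1 : p ≤ 1) {E F : Set (Matrix (Fin m) (Fin n) (ZMod 2))}
    (h : E ⊆ F) : matProb m n p E ≤ matProb m n p F :=
  sum_le_sum fun X _ => Set.indicator_le_indicator_of_subset h (matWeight_nonneg hp0 hp1) X

theorem matProb_union_le (hp0 : 0 ≤ p) (hp1 : p ≤ 1)
    (E F : Set (Matrix (Fin m) (Fin n) (ZMod 2))) :
    matProb m n p (E ∪ F) ≤ matProb m n p E + matProb m n p F := by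
  rw [matProb, matProb, matProb, ← sum_add_distrib]
  refine sum_le_sum fun X _ => ?_
  have h := congrFun (Set.indicator_union_add_inter (matWeight m n p) E F) X
  have h0 := Set.indicator_nonneg (fun X _ => matWeight_nonneg hp0 hp1 X) (s := E ∩ F) X
  simp only [Pi.add_apply] at h
  linarith

theorem matProb_iUnion_le {ι : Type*} [Fintype ι] (hp0 : 0 ≤ p) (hp1 : p ≤ 1)
    (E : ι → Set (Matrix (Fin m) (Fin n) (ZMod 2))) :
    matProb m n p (⋃ k, E k) ≤ ∑ k, matProb m n p (E k) := by
  have hw := matWeight_nonneg (m := m) (n := n) hp0 hp1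
  simp only [matProb]
  rw [sum_comm]
  refine sum_le_sum fun X _ => Set.indicator_apply_le' (fun hX => ?_)
    fun _ => sum_nonneg fun k _ => Set.indicator_nonneg (fun X _ => hw X) X
  obtain ⟨k, hk⟩ := Set.mem_iUnion.1 hX
  rw [← Set.indicator_of_mem hk (matWeight m n p)]
  exact single_le_sum (f := fun k => (E k).indicator (matWeight m n p) X)
    (fun k _ => Set.indicator_nonneg (fun X _ => hw X) X) (mem_univ k)

theorem matProb_colMass_add_le_colCount_le (hp0 : 0 ≤ p) (hp1 : p ≤ 1)
    (P : (Fin m → ZMod 2) → Prop) [DecidablePred P] {t : ℝ} (ht0 : 0 ≤ t) (ht : t ≤ 2 * n) :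
    matProb m n p {X | n * colMass p P + t ≤ colCount X P} ≤ exp (-t ^ 2 / (4 * n)) := by
  rw [matProb_eq_sum_cols]
  exact sum_pi_indicator_card_ge_le (colWeight_nonneg hp0 hp1) (sum_colWeight p) P ht0 ht

theorem matProb_colCount_add_le_colMass_le (hp0 : 0 ≤ p) (hp1 : p ≤ 1)
    (P : (Fin m → ZMod 2) → Prop) [DecidablePred P] {t : ℝ} (ht0 : 0 ≤ t) (ht : t ≤ 2 * n) :
    matProb m n p {X | colCount X P + t ≤ n * colMass p P} ≤ exp (-t ^ 2 / (4 * n)) := by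
  rw [matProb_eq_sum_cols]
  exact sum_pi_indicator_card_le_le (colWeight_nonneg hp0 hp1) (sum_colWeight p) P ht0 ht

def deviationEvent (p t : ℝ) (P : (Fin m → ZMod 2) → Prop) [DecidablePred P] :
    Set (Matrix (Fin m) (Fin n) (ZMod 2)) :=
  {X | t ≤ |(colCount X P : ℝ) - n * colMass p P|}

theorem matProb_deviationEvent_le (hp0 : 0 ≤ p) (hp1 : p ≤ 1) (P : (Fin m → ZMod 2) → Prop)
    [DecidablePred P] {t : ℝ} (ht0 : 0 ≤ t) (ht : t ≤ 2 * n) :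
    matProb m n p (deviationEvent p t P) ≤ 2 * exp (-t ^ 2 / (4 * n)) := by
  calc matProb m n p (deviationEvent p t P)
      ≤ matProb m n p ({X | n * colMass p P + t ≤ colCount X P} ∪
          {X | colCount X P + t ≤ n * colMass p P}) := by
        refine matProb_mono hp0 hp1 fun X hX => ?_
        rw [deviationEvent, Set.mem_ofPred_eq] at hX
        rw [Set.mem_union, Set.mem_ofPred_eq, Set.mem_ofPred_eq]
        rcases le_abs'.1 hX with h | h
        · exact Or.inr (by linarith)
        · exact Or.inl (by linarith)
    _ ≤ _ := (matProb_union_le hp0 hp1 _ _).trans (by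
        linarith [matProb_colMass_add_le_colCount_le hp0 hp1 P ht0 ht,
          matProb_colCount_add_le_colMass_le hp0 hp1 P ht0 ht])

def diversityEvent (m n : ℕ) (p θ : ℝ) : Set (Matrix (Fin m) (Fin n) (ZMod 2)) :=
  {X | (∀ x : Fin m, |((rightNbrs X x).card : ℝ) - n * p| ≤ n * p * θ) ∧
    (∀ x y : Fin m, x ≠ y →
      n * p * (1 - θ) - n * p ^ 2 * (1 + θ) ≤ ((rightNbrs X x \ rightNbrs X y).card : ℝ))}

theorem compl_diversityEvent_subset {θ : ℝ} (hθ0 : 0 ≤ θ) :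
    (diversityEvent m n p θ)ᶜ ⊆ ⋃ xy : Fin m × Fin m,
      deviationEvent p (n * p * θ) (· xy.1 = 1) ∪
        deviationEvent p (n * p * θ) (fun c => c xy.1 = 1 ∧ c xy.2 ≠ 1) := by
  intro X hX
  simp only [diversityEvent, Set.mem_compl_iff, Set.mem_ofPred_eq, not_and_or, not_forall,
    not_le] at hX
  simp only [Set.mem_iUnion, Set.mem_union, Prod.exists, deviationEvent, Set.mem_ofPred_eq]
  rcases hX with ⟨x, hx⟩ | ⟨x, y, hxy, hlt⟩
  · refine ⟨x, x, Or.inl ?_⟩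
    rw [colMass_apply_eq_one]
    exact hx.le
  · refine ⟨x, y, Or.inr ?_⟩
    have hcount : colCount X (fun c => c x = 1 ∧ c y ≠ 1) = #(rightNbrs X x \ rightNbrs X y) :=
      congrArg card (filter_and_not _ _ _)
    rw [colMass_apply_eq_one_and_ne_one p hxy, hcount]
    refine le_abs'.2 (Or.inl ?_)
    nlinarith [mul_nonneg (mul_nonneg (n.cast_nonneg : (0 : ℝ) ≤ n) (sq_nonneg p)) hθ0]

theorem matProb_compl_diversityEvent_le (hp0 : 0 ≤ p) (hp1 : p ≤ 1) {θ : ℝ} (hθ0 : 0 ≤ θ)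
    (hpθ : p * θ ≤ 2) :
    matProb m n p (diversityEvent m n p θ)ᶜ ≤ 4 * m ^ 2 * exp (-θ ^ 2 * n * p ^ 2 / 4) := by
  have ht : 0 ≤ (n : ℝ) * p * θ ∧ (n : ℝ) * p * θ ≤ 2 * n := by
    refine ⟨by positivity, ?_⟩
    rw [mul_assoc, mul_comm 2]
    exact mul_le_mul_of_nonneg_left hpθ n.cast_nonneg
  set t : ℝ := n * p * θ
  have hexp : exp (-t ^ 2 / (4 * n)) = exp (-θ ^ 2 * n * p ^ 2 / 4) := by
    rcases eq_or_ne (n : ℝ) 0 with hn | hn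
    · simp [t, hn]
    · congr 1; field_simp; ring
  rw [← hexp]
  calc matProb m n p (diversityEvent m n p θ)ᶜ
      ≤ ∑ xy : Fin m × Fin m, matProb m n p (deviationEvent p t (· xy.1 = 1) ∪
          deviationEvent p t (fun c => c xy.1 = 1 ∧ c xy.2 ≠ 1)) :=
        (matProb_mono hp0 hp1 (compl_diversityEvent_subset hθ0)).trans
          (matProb_iUnion_le hp0 hp1 _)
    _ ≤ ∑ _xy : Fin m × Fin m, 4 * exp (-t ^ 2 / (4 * n)) := sum_le_sum fun xy _ =>
        (matProb_union_le hp0 hp1 _ _).trans (by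
          linarith [matProb_deviationEvent_le hp0 hp1 (· xy.1 = 1) ht.1 ht.2,
            matProb_deviationEvent_le hp0 hp1 (fun c => c xy.1 = 1 ∧ c xy.2 ≠ 1) ht.1 ht.2])
    _ = 4 * m ^ 2 * exp (-t ^ 2 / (4 * n)) := by
        rw [sum_const, card_univ, Fintype.card_prod, Fintype.card_fin, nsmul_eq_mul]
        push_cast
        ring

end BernoulliMatrix

theorem diversity_events_whp_general (m n : ℕ) (p θ : ℝ)
    (hp0 : 0 < p) (hp1 : p < 1 / 2) (hθ0 : 0 < θ) (hθ1 : θ < 1 / 4) :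
    1 - 4 * (m : ℝ) ^ 2 * Real.exp (-θ ^ 2 * n * p ^ 2 / 4) ≤
      matProb m n p
        {X | (∀ x : Fin m, |((rightNbrs X x).card : ℝ) - n * p| ≤ n * p * θ) ∧
          (∀ x y : Fin m, x ≠ y →
            n * p * (1 - θ) - n * p ^ 2 * (1 + θ) ≤
              ((rightNbrs X x \ rightNbrs X y).card : ℝ))} := by
  have h := matProb_compl_diversityEvent_le (m := m) (n := n) hp0.le (by linarith) hθ0.le
    (by nlinarith)
  rw [matProb_compl] at h
  show _ ≤ matProb m n p (diversityEvent m n p θ)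
  linarith

/-- With probability at least `1 - 4 m² e^{-θ² n p² / 4}`, every right vertex `b_x`
satisfies `|#R_x - np| ≤ npθ`, and every pair of distinct right vertices `b_x, b_y`
satisfies `#(R_x \ R_y) ≥ np(1-θ) - np²(1+θ)`. -/
theorem diversity_events_whp (m n : ℕ) (hm : 0 < m) (hn : 0 < n) (p θ : ℝ)
    (hp0 : 0 < p) (hp1 : p < 1 / 2) (hθ0 : 0 < θ) (hθ1 : θ < 1 / 4) :
    1 - 4 * (m : ℝ) ^ 2 * Real.exp (-θ ^ 2 * n * p ^ 2 / 4) ≤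
      matProb m n p
        {X | (∀ x : Fin m, |((rightNbrs X x).card : ℝ) - n * p| ≤ n * p * θ) ∧
          (∀ x y : Fin m, x ≠ y →
            n * p * (1 - θ) - n * p ^ 2 * (1 + θ) ≤
              ((rightNbrs X x \ rightNbrs X y).card : ℝ))} :=
  diversity_events_whp_general m n p θ hp0 hp1 hθ0 hθ1
end

section
/- Let G be a simple graph on n vertices and let r, d be integers with 1 ≤ d ≤ r. Then α(G(r,d)) ≤ n^{r−d} · α(G(d,d)), where G(d,d) coincides with the d-th strong power G(d) and α denotes the independence number. -/
/-- The binary entropy function `H(x) = -x log₂ x - (1-x) log₂ (1-x)`. -/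
noncomputable def binH (x : ℝ) : ℝ := -x * Real.logb 2 x - (1 - x) * Real.logb 2 (1 - x)

/-- The graph `G(r,k)`: vertices are `r`-tuples of vertices of `G`, and two distinct
tuples are adjacent iff they are adjacent in the `r`-th strong power of `G` (in every
coordinate they are equal or adjacent) and they differ in at most `k` coordinates.
For `k = r` this is exactly the `r`-th strong power `G(r)`. -/
def strongPow {V : Type*} [DecidableEq V] (G : SimpleGraph V) (r k : ℕ) :
    SimpleGraph (Fin r → V) where
  Adj u v := u ≠ v ∧ (∀ i, u i = v i ∨ G.Adj (u i) (v i)) ∧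
    (Finset.univ.filter fun i => u i ≠ v i).card ≤ k
  symm := ⟨by
    rintro u v ⟨h1, h2, h3⟩
    refine ⟨fun h => h1 h.symm, fun i => (h2 i).imp Eq.symm (fun h => h.symm), ?_⟩
    have he : (Finset.univ.filter fun i => v i ≠ u i)
        = (Finset.univ.filter fun i => u i ≠ v i) := by
      ext i; simp [ne_comm]
    rw [he]; exact h3⟩
  loopless := ⟨fun u h => h.1 rfl⟩

/-- The independence number `α(H)` of a graph `H` on a finite vertex set: the maximum
size of a stable (independent) set of vertices. -/
noncomputable def indepNum {α : Type*} [Fintype α] (H : SimpleGraph α) : ℕ :=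
  sSup {k | ∃ s : Finset α, (s : Set α).Pairwise (fun a b => ¬H.Adj a b) ∧ s.card = k}

/-- The `γ`-fractional capacity `Θ_γ(G) = sup_{r ≥ 1/γ} α(G(r, ⌊γr⌋))^{1/r}`.
For `γ = 1` this is the (full) Shannon capacity `Θ(G)`. -/
noncomputable def fracCap {V : Type*} [Fintype V] [DecidableEq V]
    (γ : ℝ) (G : SimpleGraph V) : ℝ :=
  sSup {x : ℝ | ∃ r : ℕ, 1 ≤ γ * r ∧
    x = (indepNum (strongPow G r ⌊γ * r⌋₊) : ℝ) ^ ((r : ℝ)⁻¹)}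

/-! Split `Fin (d + m)` into the first `d` and the last `m` coordinates. Fixing the last `m`
coordinates to some `b` embeds `G(d,k)` into `G(d+m,k)` as a subgraph, since tuples agreeing on
the tail differ in the same coordinates as their heads. The `n^m` copies cover every vertex of
`G(d+m,k)`, and a stable set meets each copy in a stable set of `G(d,k)`. -/

open Finset

theorem indepNum_eq_simpleGraph_indepNum {α : Type*} [Fintype α] (H : SimpleGraph α) :
    indepNum H = H.indepNum := by
  simp only [indepNum, SimpleGraph.indepNum, SimpleGraph.isNIndepSet_iff, SimpleGraph.IsIndepSet]

namespace SimpleGraph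

variable {α β : Type*} {H : SimpleGraph α} {K : SimpleGraph β}

theorem IsIndepSet.preimage (f : H →g K) (hf : Function.Injective f) {t : Finset β}
    (ht : K.IsIndepSet t) : H.IsIndepSet (t.preimage f hf.injOn) := by
  intro x hx y hy hxy hadj
  exact ht (mem_preimage.1 hx) (mem_preimage.1 hy) (hf.ne hxy) (f.map_adj hadj)

theorem indepNum_le_card_mul_of_cover {ι : Type*} [Finite α] [Finite β] [Fintype ι]
    (φ : ι → H →g K) (hφ : ∀ i, Function.Injective (φ i)) (hcover : ∀ b, ∃ i a, φ i a = b) :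
    K.indepNum ≤ Fintype.card ι * H.indepNum := by
  classical
  obtain ⟨s, hs⟩ := K.exists_isNIndepSet_indepNum
  let fiber i := s.preimage (φ i) (hφ i).injOn
  have hsub : s ⊆ univ.biUnion fun i => (fiber i).image (φ i) := by
    intro b hb
    obtain ⟨i, a, rfl⟩ := hcover b
    exact mem_biUnion.2 ⟨i, mem_univ i, mem_image_of_mem _ (mem_preimage.2 hb)⟩
  calc K.indepNum = #s := hs.card_eq.symm
    _ ≤ ∑ i, #((fiber i).image (φ i)) := (card_le_card hsub).trans card_biUnion_le
    _ ≤ ∑ _i : ι, H.indepNum := sum_le_sum fun i _ =>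
        card_image_le.trans ((hs.isIndepSet.preimage (φ i) (hφ i)).card_le_indepNum)
    _ = Fintype.card ι * H.indepNum := by simp

end SimpleGraph

theorem Fin.append_left_injective {α : Type*} {m n : ℕ} (b : Fin n → α) :
    Function.Injective fun a : Fin m → α => Fin.append a b := fun a a' h =>
  funext fun i => by simpa using congrFun h (Fin.castAdd n i)

section StrongPow

variable {V : Type*} [DecidableEq V] (G : SimpleGraph V) {d m k : ℕ}

def strongPowAppend (b : Fin m → V) : strongPow G d k →g strongPow G (d + m) k where
  toFun a := Fin.append a b
  map_rel' := by
    rintro x y ⟨hne, hcoord, hcard⟩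
    refine ⟨(Fin.append_left_injective b).ne hne, Fin.addCases (by simpa using hcoord) (by simp),
      ?_⟩
    have hdiff : (univ.filter fun i => Fin.append x b i ≠ Fin.append y b i) =
        (univ.filter fun i => x i ≠ y i).map (Fin.castAddEmb m) := by
      ext i
      induction i using Fin.addCases with
      | left i => simp [(Fin.castAdd_injective d m).eq_iff]
      | right j => simpa [Fin.ext_iff] using fun i _ => (i.isLt.trans_le (d.le_add_right j)).ne
    rwa [hdiff, card_map]

theorem indepNum_strongPow_add_le [Fintype V] :
    (strongPow G (d + m) k).indepNum ≤ Fintype.card V ^ m * (strongPow G d k).indepNum := by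
  simpa using SimpleGraph.indepNum_le_card_mul_of_cover (strongPowAppend G (d := d) (k := k))
    Fin.append_left_injective
    (fun u => ⟨fun j => u (Fin.natAdd d j), fun i => u (Fin.castAdd m i),
      Fin.append_castAdd_natAdd⟩)

end StrongPow

theorem indepNum_strongPow_iterated_general {V : Type*} [Fintype V] [DecidableEq V]
    (G : SimpleGraph V) (r d : ℕ) (hdr : d ≤ r) :
    indepNum (strongPow G r d) ≤ Fintype.card V ^ (r - d) * indepNum (strongPow G d d) := by
  obtain ⟨m, rfl⟩ := Nat.exists_eq_add_of_le hdr
  simpa [indepNum_eq_simpleGraph_indepNum] using indepNum_strongPow_add_le G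

/-- Iterated recursion: `α(G(r,d)) ≤ n^{r-d} · α(G(d,d))` for `1 ≤ d ≤ r`, where
`G(d,d)` is the `d`-th strong power `G(d)`. -/
theorem indepNum_strongPow_iterated {V : Type*} [Fintype V] [DecidableEq V]
    (G : SimpleGraph V) (r d : ℕ) (hd1 : 1 ≤ d) (hdr : d ≤ r) :
    indepNum (strongPow G r d) ≤ Fintype.card V ^ (r - d) * indepNum (strongPow G d d) :=
  indepNum_strongPow_iterated_general G r d hdr
end

section
/- Let x ≥ 1 be a real number and let 0 < γ ≤ x/(x+1). Then for every positive integer r, Σ_{k=0}^{⌊γr⌋} C(r,k)·x^k ≤ 2^{H(γ)r}·x^{γr}, where C(r,k) is the binomial coefficient. -/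
open Finset Real

theorem sum_choose_mul_pow_mul_pow_le_one {p : ℝ} (hp0 : 0 ≤ p) (hp1 : p ≤ 1) {r : ℕ}
    {s : Finset ℕ} (hs : s ⊆ range (r + 1)) :
    ∑ k ∈ s, (r.choose k : ℝ) * (p ^ k * (1 - p) ^ (r - k)) ≤ 1 :=
  calc ∑ k ∈ s, (r.choose k : ℝ) * (p ^ k * (1 - p) ^ (r - k))
      ≤ ∑ k ∈ range (r + 1), (r.choose k : ℝ) * (p ^ k * (1 - p) ^ (r - k)) :=
        sum_le_sum_of_subset_of_nonneg hs fun k _ _ => by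
          have : 0 ≤ 1 - p := sub_nonneg.2 hp1
          positivity
    _ = (p + (1 - p)) ^ r := by
        rw [add_pow]
        exact sum_congr rfl fun k _ => by ring
    _ = 1 := by simp

theorem sum_choose_mul_pow_le_of_le {x p t : ℝ} (hp0 : 0 < p) (hp1 : p < 1)
    (hA : 1 ≤ x * (1 - p) / p) {r : ℕ} {s : Finset ℕ} (hs : s ⊆ range (r + 1))
    (ht : ∀ k ∈ s, (k : ℝ) ≤ t) :
    ∑ k ∈ s, (r.choose k : ℝ) * x ^ k ≤ (x * (1 - p) / p) ^ t / (1 - p) ^ r := by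
  set A := x * (1 - p) / p
  have hq : 0 < 1 - p := sub_pos.2 hp1
  have hterm : ∀ k ∈ s, (r.choose k : ℝ) * x ^ k ≤
      (r.choose k : ℝ) * (p ^ k * (1 - p) ^ (r - k)) * (A ^ t / (1 - p) ^ r) := by
    intro k hk
    have hkr : k ≤ r := Nat.lt_succ_iff.1 (mem_range.1 (hs hk))
    have htilt : x ^ k = p ^ k * (1 - p) ^ (r - k) * (A ^ k / (1 - p) ^ r) := by
      rw [div_pow, mul_pow, ← pow_sub_mul_pow (1 - p) hkr]
      field_simp
    have hAk : A ^ k ≤ A ^ t := by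
      rw [← rpow_natCast]
      exact rpow_le_rpow_of_exponent_le hA (ht k hk)
    rw [htilt, ← mul_assoc]
    gcongr
  calc ∑ k ∈ s, (r.choose k : ℝ) * x ^ k
      ≤ ∑ k ∈ s, (r.choose k : ℝ) * (p ^ k * (1 - p) ^ (r - k)) * (A ^ t / (1 - p) ^ r) :=
        sum_le_sum hterm
    _ ≤ 1 * (A ^ t / (1 - p) ^ r) := by
        rw [← sum_mul]
        gcongr
        exact sum_choose_mul_pow_mul_pow_le_one hp0.le hp1.le hs
    _ = A ^ t / (1 - p) ^ r := one_mul _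

theorem two_rpow_binH_mul (γ t : ℝ) :
    (2 : ℝ) ^ (binH γ * t) = exp ((-γ * log γ - (1 - γ) * log (1 - γ)) * t) := by
  rw [rpow_def_of_pos two_pos, binH, logb, logb]
  field_simp

theorem div_rpow_div_rpow_eq_two_rpow_binH_mul {x γ : ℝ} (hx : 0 < x) (hγ0 : 0 < γ)
    (hγ1 : γ < 1) (t : ℝ) :
    (x * (1 - γ) / γ) ^ (γ * t) / (1 - γ) ^ t = (2 : ℝ) ^ (binH γ * t) * x ^ (γ * t) := by
  have hq : 0 < 1 - γ := sub_pos.2 hγ1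
  rw [two_rpow_binH_mul, rpow_def_of_pos (by positivity), rpow_def_of_pos hq,
    rpow_def_of_pos hx, ← exp_sub, ← exp_add, log_div (by positivity) hγ0.ne',
    log_mul hx.ne' hq.ne']
  congr 1
  ring

theorem weighted_hamming_ball_bound_general (x γ : ℝ) (hx : 1 ≤ x)
    (hγ0 : 0 < γ) (hγ1 : γ ≤ x / (x + 1)) (r : ℕ) :
    ∑ k ∈ Finset.range (⌊γ * r⌋₊ + 1), (r.choose k : ℝ) * x ^ k ≤
      (2 : ℝ) ^ (binH γ * r) * x ^ (γ * r) := by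
  have hx0 : 0 < x := by linarith
  have hγlt1 : γ < 1 := hγ1.trans_lt <| (div_lt_one (by linarith)).2 (by linarith)
  have hA : 1 ≤ x * (1 - γ) / γ := by
    rw [le_div_iff₀ hγ0, one_mul]
    rw [le_div_iff₀ (by linarith)] at hγ1
    linarith
  have hγr : γ * r ≤ r := mul_le_of_le_one_left r.cast_nonneg hγlt1.le
  have hs : range (⌊γ * r⌋₊ + 1) ⊆ range (r + 1) :=
    range_subset_range.2 <| Nat.succ_le_succ <| Nat.floor_le_of_le hγr
  have ht : ∀ k ∈ range (⌊γ * r⌋₊ + 1), (k : ℝ) ≤ γ * r := fun k hk =>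
    Nat.le_floor_iff (by positivity) |>.1 (Nat.lt_succ_iff.1 (mem_range.1 hk))
  calc ∑ k ∈ range (⌊γ * r⌋₊ + 1), (r.choose k : ℝ) * x ^ k
      ≤ (x * (1 - γ) / γ) ^ (γ * r) / (1 - γ) ^ (r : ℝ) := by
        rw [rpow_natCast]
        exact sum_choose_mul_pow_le_of_le hγ0 hγlt1 hA hs ht
    _ = (2 : ℝ) ^ (binH γ * r) * x ^ (γ * r) :=
        div_rpow_div_rpow_eq_two_rpow_binH_mul hx0 hγ0 hγlt1 r

/-- Weighted Hamming-ball estimate: for real `x ≥ 1`, `0 < γ ≤ x/(x+1)` and every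
positive integer `r`, `Σ_{k=0}^{⌊γr⌋} C(r,k) x^k ≤ 2^{H(γ)r} x^{γr}`. -/
theorem weighted_hamming_ball_bound (x γ : ℝ) (hx : 1 ≤ x)
    (hγ0 : 0 < γ) (hγ1 : γ ≤ x / (x + 1)) (r : ℕ) (hr : 1 ≤ r) :
    ∑ k ∈ Finset.range (⌊γ * r⌋₊ + 1), (r.choose k : ℝ) * x ^ k ≤
      (2 : ℝ) ^ (binH γ * r) * x ^ (γ * r) :=
  weighted_hamming_ball_bound_general x γ hx hγ0 hγ1 r
end
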